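/- For the single-qubit channel with Kraus family K₁ = √(1−p_y)·R, K₂ = √p_y·σ_y R (where 0 ≤ p_y < 1, R = diag(e^{−iω/2}, e^{iω/2})) and derivative family given by the entrywise ω-derivatives K̇₁ = −(i/2)√(1−p_y)·σ_z R, K̇₂ = (1/2)√p_y·σ_x R, the infimum over 2×2 Hermitian matrices h of 4‖β(h)‖² equals 1, and it is attained. -/

import Mathlib

open Matrix

/-- The ℓ²→ℓ² operator norm (largest singular value) of a complex matrix. -/
noncomputable def opNorm {m n : Type*} [Fintype m] [Fintype n] [DecidableEq n]
    (A : Matrix m n ℂ) : ℝ :=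
  ‖LinearMap.toContinuousLinearMap (Matrix.toEuclideanLin A)‖

/-- `β(h) = H + ∑_{i,j} h_{ij} K_i† K_j` where `H = i ∑_i K_i† K̇_i`. -/
noncomputable def krausBeta {d d' r : ℕ} (K Kd : Fin r → Matrix (Fin d') (Fin d) ℂ)
    (h : Matrix (Fin r) (Fin r) ℂ) : Matrix (Fin d) (Fin d) ℂ :=
  (Complex.I • ∑ i, (K i)ᴴ * Kd i) + ∑ i, ∑ j, h i j • ((K i)ᴴ * K j)

def pauliX : Matrix (Fin 2) (Fin 2) ℂ := !![0, 1; 1, 0]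
noncomputable def pauliY : Matrix (Fin 2) (Fin 2) ℂ := !![0, -Complex.I; Complex.I, 0]
def pauliZ : Matrix (Fin 2) (Fin 2) ℂ := !![1, 0; 0, -1]

noncomputable def Rz (ω : ℝ) : Matrix (Fin 2) (Fin 2) ℂ :=
  !![Complex.exp (-(Complex.I * ω / 2)), 0; 0, Complex.exp (Complex.I * ω / 2)]

/-- Kraus family of a Pauli-Z rotation composed with pure σ_y noise. -/
noncomputable def yNoiseK (py ω : ℝ) : Fin 2 → Matrix (Fin 2) (Fin 2) ℂ :=
  ![(Real.sqrt (1 - py) : ℂ) • Rz ω, (Real.sqrt py : ℂ) • (pauliY * Rz ω)]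

/-- Derivative family (entrywise ω-derivatives). -/
noncomputable def yNoiseKdot (py ω : ℝ) : Fin 2 → Matrix (Fin 2) (Fin 2) ℂ :=
  ![(-(Complex.I / 2) * (Real.sqrt (1 - py) : ℂ)) • (pauliZ * Rz ω),
    ((1 / 2 : ℂ) * (Real.sqrt py : ℂ)) • (pauliX * Rz ω)]

/-!
Both `K` and `K̇` depend on `ω` only through the right factor `Rz ω`, so `β(h)` is the unitary
conjugate `Rz ωᴴ β₀(h) Rz ω` of its value at `ω = 0`, and `‖β(h)‖ = ‖β₀(h)‖`. A direct computation
gives `β₀(h) = σ_z / 2 + c • 1 + e • σ_y` with `c, e` depending on `h`; its diagonal entries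
differ by `1`, and every entry is bounded by the operator norm, so `‖β(h)‖ ≥ 1 / 2`, with equality
for `h = 0`, where `β₀(0) = σ_z / 2`.
-/

open scoped Matrix.Norms.L2Operator

namespace Matrix

variable {𝕜 m n : Type*} [RCLike 𝕜] [Fintype m] [Fintype n] [DecidableEq n]

lemma norm_entry_le_l2_opNorm (A : Matrix m n 𝕜) (i : m) (j : n) : ‖A i j‖ ≤ ‖A‖ :=
  calc ‖A i j‖ = ‖(EuclideanSpace.equiv m 𝕜).symm (A *ᵥ EuclideanSpace.single j 1) i‖ := by
        simp
    _ ≤ ‖(EuclideanSpace.equiv m 𝕜).symm (A *ᵥ EuclideanSpace.single j 1)‖ :=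
        PiLp.norm_apply_le _ _
    _ ≤ ‖A‖ * ‖EuclideanSpace.single j (1 : 𝕜)‖ := A.l2_opNorm_mulVec _
    _ = ‖A‖ := by simp

lemma l2_opNorm_conjTranspose_mul_mul_of_mem_unitaryGroup {U : Matrix n n 𝕜}
    (hU : U ∈ unitaryGroup n 𝕜) (A : Matrix n n 𝕜) : ‖Uᴴ * A * U‖ = ‖A‖ := by
  rw [CStarRing.norm_mul_mem_unitary _ hU, ← star_eq_conjTranspose,
    CStarRing.norm_mem_unitary_mul _ (Unitary.star_mem hU)]

end Matrix

lemma opNorm_eq_l2_opNorm {m n : Type*} [Fintype m] [Fintype n] [DecidableEq n]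
    (A : Matrix m n ℂ) : opNorm A = ‖A‖ :=
  rfl

lemma krausBeta_mul_right {d d' r : ℕ} (K Kd : Fin r → Matrix (Fin d') (Fin d) ℂ)
    (U : Matrix (Fin d) (Fin d) ℂ) (h : Matrix (Fin r) (Fin r) ℂ) :
    krausBeta (fun i => K i * U) (fun i => Kd i * U) h = Uᴴ * krausBeta K Kd h * U := by
  simp only [krausBeta, conjTranspose_mul, Matrix.add_mul, Matrix.mul_add, Finset.sum_mul,
    Finset.mul_sum, Matrix.smul_mul, Matrix.mul_smul, Matrix.mul_assoc]

lemma pauliZ_mem_unitaryGroup : pauliZ ∈ unitaryGroup (Fin 2) ℂ := by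
  rw [mem_unitaryGroup_iff]
  ext i j
  fin_cases i <;> fin_cases j <;> simp [pauliZ, Matrix.mul_apply]

lemma pauliY_conjTranspose : pauliYᴴ = pauliY := by
  ext i j
  fin_cases i <;> fin_cases j <;> simp [pauliY]

lemma pauliY_mul_pauliY : pauliY * pauliY = 1 := by
  ext i j
  fin_cases i <;> fin_cases j <;> simp [pauliY, Matrix.mul_apply]

lemma pauliY_mul_pauliX : pauliY * pauliX = -Complex.I • pauliZ := by
  ext i j
  fin_cases i <;> fin_cases j <;> simp [pauliX, pauliY, pauliZ, Matrix.mul_apply]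

lemma Rz_zero : Rz 0 = 1 := by
  simp [Rz, Matrix.one_fin_two]

lemma Rz_mem_unitaryGroup (ω : ℝ) : Rz ω ∈ unitaryGroup (Fin 2) ℂ := by
  rw [mem_unitaryGroup_iff']
  ext i j
  fin_cases i <;> fin_cases j <;>
    simp [Rz, Matrix.mul_apply, ← Complex.exp_conj, ← Complex.exp_add, map_div₀, Complex.conj_ofNat,
      neg_div]

lemma yNoiseK_eq_mul_Rz (py ω : ℝ) : yNoiseK py ω = fun i => yNoiseK py 0 i * Rz ω := by
  ext1 i
  fin_cases i <;> simp [yNoiseK, Rz_zero]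

lemma yNoiseKdot_eq_mul_Rz (py ω : ℝ) : yNoiseKdot py ω = fun i => yNoiseKdot py 0 i * Rz ω := by
  ext1 i
  fin_cases i <;> simp [yNoiseKdot, Rz_zero]

lemma krausBeta_yNoise_zero {py : ℝ} (h0 : 0 ≤ py) (h1 : py ≤ 1) (h : Matrix (Fin 2) (Fin 2) ℂ) :
    krausBeta (yNoiseK py 0) (yNoiseKdot py 0) h =
      (1 / 2 : ℂ) • pauliZ + (h 0 0 * (1 - py) + h 1 1 * py) • 1 +
        ((h 0 1 + h 1 0) * √(1 - py) * √py) • pauliY := by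
  have hq : (√(1 - py) : ℂ) ^ 2 = 1 - py := by
    rw [← Complex.ofReal_pow, Real.sq_sqrt (by linarith)]; push_cast; ring
  have hp : (√py : ℂ) ^ 2 = py := by
    rw [← Complex.ofReal_pow, Real.sq_sqrt h0]
  simp only [krausBeta, yNoiseK, yNoiseKdot, Rz_zero, mul_one, Fin.sum_univ_two, cons_val_zero,
    cons_val_one, cons_val_fin_one, conjTranspose_smul, conjTranspose_one, pauliY_conjTranspose,
    Complex.star_def, Complex.conj_ofReal, smul_mul_smul_comm, one_mul,
    pauliY_mul_pauliY, pauliY_mul_pauliX, smul_smul]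
  match_scalars
  · linear_combination -(Complex.I ^ 2 / 2) * (hq + hp) - Complex.I_sq / 2
  · linear_combination h 0 0 * hq + h 1 1 * hp
  · ring

lemma opNorm_krausBeta_yNoise {py : ℝ} (h0 : 0 ≤ py) (h1 : py ≤ 1) (ω : ℝ)
    (h : Matrix (Fin 2) (Fin 2) ℂ) :
    opNorm (krausBeta (yNoiseK py ω) (yNoiseKdot py ω) h) =
      ‖(1 / 2 : ℂ) • pauliZ + (h 0 0 * (1 - py) + h 1 1 * py) • 1 +
        ((h 0 1 + h 1 0) * √(1 - py) * √py) • pauliY‖ := by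
  rw [opNorm_eq_l2_opNorm, yNoiseK_eq_mul_Rz, yNoiseKdot_eq_mul_Rz, krausBeta_mul_right,
    l2_opNorm_conjTranspose_mul_mul_of_mem_unitaryGroup (Rz_mem_unitaryGroup ω),
    krausBeta_yNoise_zero h0 h1]

lemma norm_half_smul_pauliZ : ‖(1 / 2 : ℂ) • pauliZ‖ = 1 / 2 := by
  rw [norm_smul, CStarRing.norm_of_mem_unitary pauliZ_mem_unitaryGroup]
  norm_num

lemma half_le_norm_pauli_combination (c e : ℂ) :
    1 / 2 ≤ ‖(1 / 2 : ℂ) • pauliZ + c • 1 + e • pauliY‖ := by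
  set A := (1 / 2 : ℂ) • pauliZ + c • 1 + e • pauliY
  have hdiag : A 0 0 - A 1 1 = 1 := by
    norm_num [A, pauliZ, pauliY]
  have := calc (1 : ℝ) = ‖A 0 0 - A 1 1‖ := by rw [hdiag, norm_one]
    _ ≤ ‖A 0 0‖ + ‖A 1 1‖ := norm_sub_le _ _
    _ ≤ ‖A‖ + ‖A‖ := add_le_add (A.norm_entry_le_l2_opNorm 0 0) (A.norm_entry_le_l2_opNorm 1 1)
  linarith

/-- For the Pauli-Z rotation with pure σ_y noise (`0 ≤ p_y < 1`), the Heisenberg-limit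
coefficient `inf_h 4‖β(h)‖²` equals `1`, and the infimum is attained. -/
theorem yNoise_HL_coefficient (py ω : ℝ) (h0 : 0 ≤ py) (h1 : py < 1) :
    IsLeast {x : ℝ | ∃ h : Matrix (Fin 2) (Fin 2) ℂ, h.IsHermitian ∧
        x = 4 * opNorm (krausBeta (yNoiseK py ω) (yNoiseKdot py ω) h) ^ 2} 1 := by
  refine ⟨⟨0, isHermitian_zero, ?_⟩, ?_⟩
  · rw [opNorm_krausBeta_yNoise h0 h1.le]
    simp only [Matrix.zero_apply, zero_mul, zero_smul, add_zero, norm_half_smul_pauliZ]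
    norm_num
  · rintro _ ⟨h, -, rfl⟩
    have := half_le_norm_pauli_combination (h 0 0 * (1 - py) + h 1 1 * py)
      ((h 0 1 + h 1 0) * √(1 - py) * √py)
    rw [opNorm_krausBeta_yNoise h0 h1.le]
    nlinarith
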